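/- Let 𝔊ᵢ (i = 1,2,3) be crossed modules of groupoids with common object space X, and let M be a crossing from 𝔊₁ to 𝔊₂ (via α₁,α₂,β₁,β₂) and N a crossing from 𝔊₂ to 𝔊₃ (via δ₁,δ₂,θ₁,θ₂). Define the diamond product M ◇ N as the quotient of {(m,n) ∈ M × N : β₂(m) = δ₂(n)} by the relation (β₁(h₂)m, δ₁(h₂)n) ∼ (m,n) for h₂ ∈ H₂. Then componentwise composition [m,n][m',n'] = [mm', nn'] and inverse [m,n]⁻¹ = [m⁻¹, n⁻¹] are well-defined and make M ◇ N a groupoid over X, and with the morphisms h₁ ↦ [α₁(h₁), s(h₁)], [m,n] ↦ α₂(m), h₃ ↦ [s(h₃), θ₁(h₃)], [m,n] ↦ θ₂(n), it is a crossing from 𝔊₁ to 𝔊₃. -/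
import Mathlib


/-- A groupoid with object space `X`.  Composition is written in "paper
order": `comp g h` is defined when the source of `g` equals the target of
`h`; here `Hom x y` is the set of arrows with source `x` and target `y`, so
for `g : Hom y z` and `h : Hom x y` we have `comp g h : Hom x z`
("first `h`, then `g`"). -/
structure GpdOver (X : Type) where
  Hom : X → X → Type
  id : ∀ x, Hom x x
  comp : ∀ {x y z : X}, Hom y z → Hom x y → Hom x z
  inv : ∀ {x y : X}, Hom x y → Hom y x
  comp_assoc : ∀ {x y z w : X} (g : Hom z w) (h : Hom y z) (k : Hom x y),
    comp (comp g h) k = comp g (comp h k)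
  id_comp : ∀ {x y : X} (g : Hom x y), comp (id y) g = g
  comp_id : ∀ {x y : X} (g : Hom x y), comp g (id x) = g
  comp_inv : ∀ {x y : X} (g : Hom x y), comp g (inv g) = id y
  inv_comp : ∀ {x y : X} (g : Hom x y), comp (inv g) g = id x

/-- A crossed module of groupoids over the object space `X`: a groupoid `G`
over `X`, a bundle of groups `H` over `X`, a morphism `δ : H → G` over the
identity of `X` (landing in loops), and an action `act` of `G` on `H` by
group isomorphisms (`act g : H y → H x` for `g : Hom x y`), satisfying
`δ (act g a) = g⁻¹ · δ a · g` and `act (δ a) b = a⁻¹ b a`. -/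
structure XMod (X : Type) where
  G : GpdOver X
  H : X → Type
  mul : ∀ {x : X}, H x → H x → H x
  one : ∀ x : X, H x
  hinv : ∀ {x : X}, H x → H x
  mul_assoc : ∀ {x : X} (a b c : H x), mul (mul a b) c = mul a (mul b c)
  one_mul : ∀ {x : X} (a : H x), mul (one x) a = a
  mul_one : ∀ {x : X} (a : H x), mul a (one x) = a
  inv_mul : ∀ {x : X} (a : H x), mul (hinv a) a = one x
  mul_inv : ∀ {x : X} (a : H x), mul a (hinv a) = one x
  δ : ∀ {x : X}, H x → G.Hom x x
  δ_mul : ∀ {x : X} (a b : H x), δ (mul a b) = G.comp (δ a) (δ b)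
  δ_one : ∀ x : X, δ (one x) = G.id x
  act : ∀ {x y : X}, G.Hom x y → H y → H x
  act_id : ∀ {x : X} (a : H x), act (G.id x) a = a
  act_comp : ∀ {x y z : X} (g : G.Hom y z) (h : G.Hom x y) (a : H z),
    act (G.comp g h) a = act h (act g a)
  act_mul : ∀ {x y : X} (g : G.Hom x y) (a b : H y),
    act g (mul a b) = mul (act g a) (act g b)
  act_one : ∀ {x y : X} (g : G.Hom x y), act g (one y) = one x
  δ_act : ∀ {x y : X} (g : G.Hom x y) (a : H y),
    δ (act g a) = G.comp (G.inv g) (G.comp (δ a) g)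
  act_δ : ∀ {x : X} (a b : H x), act (δ a) b = mul (hinv a) (mul b a)

/-- A strict morphism of groupoids over the same object space `X`. -/
structure GpdHom {X : Type} (M N : GpdOver X) where
  map : ∀ {x y : X}, M.Hom x y → N.Hom x y
  map_comp : ∀ {x y z : X} (g : M.Hom y z) (h : M.Hom x y),
    map (M.comp g h) = N.comp (map g) (map h)
  map_id : ∀ x : X, map (M.id x) = N.id x
  map_inv : ∀ {x y : X} (g : M.Hom x y), map (M.inv g) = N.inv (map g)

/-- A strict morphism of crossed modules of groupoids over the same object
space `X`. -/
structure XModHom {X : Type} (A B : XMod X) where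
  mapH : ∀ {x : X}, A.H x → B.H x
  mapG : ∀ {x y : X}, A.G.Hom x y → B.G.Hom x y
  mapH_mul : ∀ {x : X} (a b : A.H x), mapH (A.mul a b) = B.mul (mapH a) (mapH b)
  mapG_comp : ∀ {x y z : X} (g : A.G.Hom y z) (h : A.G.Hom x y),
    mapG (A.G.comp g h) = B.G.comp (mapG g) (mapG h)
  mapG_id : ∀ x : X, mapG (A.G.id x) = B.G.id x
  comm : ∀ {x : X} (a : A.H x), B.δ (mapH a) = mapG (A.δ a)
  equivar : ∀ {x y : X} (g : A.G.Hom x y) (a : A.H y),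
    mapH (A.act g a) = B.act (mapG g) (mapH a)

/-- A crossing from the crossed module `A` to the crossed module `B`
(both over the same object space `X`, with trivial anchor maps):
a groupoid `M` over `X` together with morphisms `α₁ : H₁ → M`,
`α₂ : M → G₁`, `β₁ : H₂ → M`, `β₂ : M → G₂` (all the identity on objects),
such that `α₂∘α₁ = ∂₁`, `β₂∘β₁ = ∂₂`, the diagonals are complexes,
`H₂ → M → G₁` is an extension of groupoids, and the conjugation identities
hold. -/
structure Crossing {X : Type} (A B : XMod X) where
  M : GpdOver X
  α₁ : ∀ {x : X}, A.H x → M.Hom x x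
  α₂ : GpdHom M A.G
  β₁ : ∀ {x : X}, B.H x → M.Hom x x
  β₂ : GpdHom M B.G
  α₁_mul : ∀ {x : X} (a b : A.H x), α₁ (A.mul a b) = M.comp (α₁ a) (α₁ b)
  β₁_mul : ∀ {x : X} (a b : B.H x), β₁ (B.mul a b) = M.comp (β₁ a) (β₁ b)
  tri₁ : ∀ {x : X} (a : A.H x), α₂.map (α₁ a) = A.δ a
  tri₂ : ∀ {x : X} (b : B.H x), β₂.map (β₁ b) = B.δ b
  diag₁ : ∀ {x : X} (a : A.H x), β₂.map (α₁ a) = B.G.id x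
  diag₂ : ∀ {x : X} (b : B.H x), α₂.map (β₁ b) = A.G.id x
  β₁_inj : ∀ {x : X} (b b' : B.H x), β₁ b = β₁ b' → b = b'
  α₂_surj : ∀ {x y : X} (g : A.G.Hom x y), ∃ m : M.Hom x y, α₂.map m = g
  exact₁ : ∀ {x : X} (m : M.Hom x x), α₂.map m = A.G.id x → ∃ b : B.H x, β₁ b = m
  conj₁ : ∀ {x y : X} (m : M.Hom x y) (a : A.H y),
    α₁ (A.act (α₂.map m) a) = M.comp (M.inv m) (M.comp (α₁ a) m)
  conj₂ : ∀ {x y : X} (m : M.Hom x y) (b : B.H y),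
    β₁ (B.act (β₂.map m) b) = M.comp (M.inv m) (M.comp (β₁ b) m)

/-- A crossed extension of `A` and `B`: a crossing for which the other
diagonal `H₁ → M → G₂` is also an extension of groupoids. -/
structure CrossedExt {X : Type} (A B : XMod X) extends Crossing A B where
  α₁_inj : ∀ {x : X} (a a' : A.H x), α₁ a = α₁ a' → a = a'
  β₂_surj : ∀ {x y : X} (g : B.G.Hom x y), ∃ m : M.Hom x y, β₂.map m = g
  exact₂ : ∀ {x : X} (m : M.Hom x x), β₂.map m = B.G.id x → ∃ a : A.H x, α₁ a = m

section Diamond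

variable {X : Type} {A B C : XMod X} (M : Crossing A B) (N : Crossing B C)

/-- Pairs `(m, n) ∈ M × N` with `β₂(m) = δ₂(n)`. -/
def DPair (x y : X) : Type :=
  {p : M.M.Hom x y × N.M.Hom x y // M.β₂.map p.1 = N.α₂.map p.2}

/-- The relation generated by `(β₁(h₂)·m, δ₁(h₂)·n) ∼ (m, n)` for
`h₂ ∈ H₂`. -/
def DRel (x y : X) (p q : DPair M N x y) : Prop :=
  ∃ h : B.H y,
    p.1.1 = M.M.comp (M.β₁ h) q.1.1 ∧ p.1.2 = N.M.comp (N.α₁ h) q.1.2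

/-- The arrows of the diamond product `M ◇ N`. -/
def DHom (x y : X) : Type := Quot (DRel M N x y)

/-- The class of a pair in the diamond product. -/
def dmk {x y : X} (p : DPair M N x y) : DHom M N x y := Quot.mk _ p

end Diamond

section Aux

namespace GpdOver

variable {X : Type} (G : GpdOver X)

theorem eq_inv_of {x y : X} (a : G.Hom x y) (c : G.Hom y x)
    (h : G.comp c a = G.id x) : c = G.inv a := by
  calc c = G.comp c (G.comp a (G.inv a)) := by rw [G.comp_inv, G.comp_id]
  _ = G.comp (G.comp c a) (G.inv a) := by rw [G.comp_assoc]
  _ = G.inv a := by rw [h, G.id_comp]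

theorem inv_inv {x y : X} (a : G.Hom x y) : G.inv (G.inv a) = a :=
  (G.eq_inv_of (G.inv a) a (G.comp_inv a)).symm

theorem inv_comp' {x y z : X} (a : G.Hom y z) (b : G.Hom x y) :
    G.inv (G.comp a b) = G.comp (G.inv b) (G.inv a) := by
  refine (G.eq_inv_of _ _ ?_).symm
  calc G.comp (G.comp (G.inv b) (G.inv a)) (G.comp a b)
      = G.comp (G.inv b) (G.comp (G.comp (G.inv a) a) b) := by
        rw [G.comp_assoc, G.comp_assoc]
  _ = G.id _ := by rw [G.inv_comp, G.id_comp, G.inv_comp]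

theorem self_eq_id {x : X} (a : G.Hom x x) (h : G.comp a a = a) : a = G.id x := by
  calc a = G.comp (G.comp (G.inv a) a) a := by rw [G.inv_comp, G.id_comp]
  _ = G.comp (G.inv a) (G.comp a a) := by rw [G.comp_assoc]
  _ = G.id x := by rw [h, G.inv_comp]

end GpdOver

namespace Crossing

variable {X : Type} {A B : XMod X} (M : Crossing A B)

theorem β₁_one (x : X) : M.β₁ (B.one x) = M.M.id x :=
  M.M.self_eq_id _ (by rw [← M.β₁_mul, B.mul_one])

theorem β₁_hinv {x : X} (b : B.H x) : M.β₁ (B.hinv b) = M.M.inv (M.β₁ b) :=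
  M.M.eq_inv_of _ _ (by rw [← M.β₁_mul, B.inv_mul, M.β₁_one])

theorem α₁_one (x : X) : M.α₁ (A.one x) = M.M.id x :=
  M.M.self_eq_id _ (by rw [← M.α₁_mul, A.mul_one])

theorem α₁_hinv {x : X} (a : A.H x) : M.α₁ (A.hinv a) = M.M.inv (M.α₁ a) :=
  M.M.eq_inv_of _ _ (by rw [← M.α₁_mul, A.inv_mul, M.α₁_one])

end Crossing

section DiamondAux

variable {X : Type} {A B C : XMod X} (M : Crossing A B) (N : Crossing B C)

theorem drel_refl {x y : X} (p : DPair M N x y) : DRel M N x y p p :=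
  ⟨B.one y, by rw [M.β₁_one, M.M.id_comp], by rw [N.α₁_one, N.M.id_comp]⟩

theorem drel_symm {x y : X} {p q : DPair M N x y} (h : DRel M N x y p q) :
    DRel M N x y q p := by
  obtain ⟨h, h1, h2⟩ := h
  refine ⟨B.hinv h, ?_, ?_⟩
  · rw [h1, M.β₁_hinv, ← M.M.comp_assoc, M.M.inv_comp, M.M.id_comp]
  · rw [h2, N.α₁_hinv, ← N.M.comp_assoc, N.M.inv_comp, N.M.id_comp]

theorem drel_trans {x y : X} {p q r : DPair M N x y} (hpq : DRel M N x y p q)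
    (hqr : DRel M N x y q r) : DRel M N x y p r := by
  obtain ⟨h, h1, h2⟩ := hpq
  obtain ⟨h', h1', h2'⟩ := hqr
  refine ⟨B.mul h h', ?_, ?_⟩
  · rw [h1, h1', M.β₁_mul, M.M.comp_assoc]
  · rw [h2, h2', N.α₁_mul, N.M.comp_assoc]

theorem drel_of_eq {x y : X} {p q : DPair M N x y}
    (h : dmk M N p = dmk M N q) : DRel M N x y p q := by
  have h' := Quot.eqvGen_exact h
  clear h
  induction h' with
  | rel _ _ h => exact h
  | refl _ => exact drel_refl M N _
  | symm _ _ _ ih => exact drel_symm M N ih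
  | trans _ _ _ _ _ ih₁ ih₂ => exact drel_trans M N ih₁ ih₂

/-- Componentwise composition of diamond pairs. -/
def dcompPair {x y z : X} (p : DPair M N y z) (q : DPair M N x y) :
    DPair M N x z :=
  ⟨(M.M.comp p.1.1 q.1.1, N.M.comp p.1.2 q.1.2), by
    rw [M.β₂.map_comp, N.α₂.map_comp, p.2, q.2]⟩

/-- Componentwise inverse of diamond pairs. -/
def dinvPair {x y : X} (p : DPair M N x y) : DPair M N y x :=
  ⟨(M.M.inv p.1.1, N.M.inv p.1.2), by rw [M.β₂.map_inv, N.α₂.map_inv, p.2]⟩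

theorem comm_fst {y z : X} (p : DPair M N y z) (h : B.H y) :
    M.M.comp p.1.1 (M.β₁ h) =
      M.M.comp (M.β₁ (B.act (B.G.inv (M.β₂.map p.1.1)) h)) p.1.1 := by
  have := M.conj₂ (M.M.inv p.1.1) h
  rw [M.β₂.map_inv, M.M.inv_inv] at this
  rw [this, M.M.comp_assoc, M.M.comp_assoc, M.M.inv_comp, M.M.comp_id]

theorem comm_snd {y z : X} (p : DPair M N y z) (h : B.H y) :
    N.M.comp p.1.2 (N.α₁ h) =
      N.M.comp (N.α₁ (B.act (B.G.inv (M.β₂.map p.1.1)) h)) p.1.2 := by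
  have := N.conj₁ (N.M.inv p.1.2) h
  rw [N.α₂.map_inv, N.M.inv_inv, ← p.2] at this
  rw [this, N.M.comp_assoc, N.M.comp_assoc, N.M.inv_comp, N.M.comp_id]

theorem drel_comp_right {x y z : X} (p : DPair M N y z) {q q' : DPair M N x y}
    (hq : DRel M N x y q q') :
    DRel M N x z (dcompPair M N p q) (dcompPair M N p q') := by
  obtain ⟨h, h1, h2⟩ := hq
  refine ⟨B.act (B.G.inv (M.β₂.map p.1.1)) h, ?_, ?_⟩
  · show M.M.comp p.1.1 q.1.1 =
      M.M.comp (M.β₁ (B.act (B.G.inv (M.β₂.map p.1.1)) h)) (M.M.comp p.1.1 q'.1.1)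
    rw [h1, ← M.M.comp_assoc, comm_fst M N p h, M.M.comp_assoc]
  · show N.M.comp p.1.2 q.1.2 =
      N.M.comp (N.α₁ (B.act (B.G.inv (M.β₂.map p.1.1)) h)) (N.M.comp p.1.2 q'.1.2)
    rw [h2, ← N.M.comp_assoc, comm_snd M N p h, N.M.comp_assoc]

theorem drel_comp_left {x y z : X} {p p' : DPair M N y z} (q : DPair M N x y)
    (hp : DRel M N y z p p') :
    DRel M N x z (dcompPair M N p q) (dcompPair M N p' q) := by
  obtain ⟨h, h1, h2⟩ := hp
  refine ⟨h, ?_, ?_⟩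
  · show M.M.comp p.1.1 q.1.1 = M.M.comp (M.β₁ h) (M.M.comp p'.1.1 q.1.1)
    rw [h1, M.M.comp_assoc]
  · show N.M.comp p.1.2 q.1.2 = N.M.comp (N.α₁ h) (N.M.comp p'.1.2 q.1.2)
    rw [h2, N.M.comp_assoc]

theorem drel_inv {x y : X} {p q : DPair M N x y} (h : DRel M N x y p q) :
    DRel M N y x (dinvPair M N p) (dinvPair M N q) := by
  obtain ⟨h, h1, h2⟩ := h
  refine ⟨B.act (M.β₂.map q.1.1) (B.hinv h), ?_, ?_⟩
  · show M.M.inv p.1.1 =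
      M.M.comp (M.β₁ (B.act (M.β₂.map q.1.1) (B.hinv h))) (M.M.inv q.1.1)
    rw [M.conj₂ q.1.1 (B.hinv h), h1, M.M.inv_comp', M.β₁_hinv,
      M.M.comp_assoc, M.M.comp_assoc, M.M.comp_inv, M.M.comp_id]
  · have e : N.α₁ (B.act (M.β₂.map q.1.1) (B.hinv h)) =
        N.M.comp (N.M.inv q.1.2) (N.M.comp (N.α₁ (B.hinv h)) q.1.2) := by
      rw [q.2]; exact N.conj₁ q.1.2 (B.hinv h)
    show N.M.inv p.1.2 =
      N.M.comp (N.α₁ (B.act (M.β₂.map q.1.1) (B.hinv h))) (N.M.inv q.1.2)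
    rw [e, h2, N.M.inv_comp', N.α₁_hinv,
      N.M.comp_assoc, N.M.comp_assoc, N.M.comp_inv, N.M.comp_id]

theorem dmk_eq_of {x y : X} {p q : DPair M N x y} (h1 : p.1.1 = q.1.1)
    (h2 : p.1.2 = q.1.2) : dmk M N p = dmk M N q :=
  congrArg (dmk M N) (Subtype.ext (Prod.ext h1 h2))

/-- Composition on the diamond product. -/
def Dcomp {x y z : X} : DHom M N y z → DHom M N x y → DHom M N x z :=
  Quot.map₂ (dcompPair M N) (fun p _ _ h => drel_comp_right M N p h)
    (fun _ _ q h => drel_comp_left M N q h)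

/-- Inversion on the diamond product. -/
def Dinv {x y : X} : DHom M N x y → DHom M N y x :=
  Quot.map (dinvPair M N) (fun _ _ h => drel_inv M N h)

/-- Identities of the diamond product. -/
def Did (x : X) : DHom M N x x :=
  dmk M N ⟨(M.M.id x, N.M.id x), by rw [M.β₂.map_id, N.α₂.map_id]⟩

/-- The map `h₁ ↦ [α₁(h₁), 1]`. -/
def Dα₁ {x : X} (a : A.H x) : DHom M N x x :=
  dmk M N ⟨(M.α₁ a, N.M.id x), by rw [M.diag₁, N.α₂.map_id]⟩

/-- The map `[m,n] ↦ α₂(m)`. -/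
def Dα₂ {x y : X} : DHom M N x y → A.G.Hom x y :=
  Quot.lift (fun p => M.α₂.map p.1.1) (by
    rintro p q ⟨h, h1, -⟩
    rw [h1, M.α₂.map_comp, M.diag₂, A.G.id_comp])

/-- The map `h₃ ↦ [1, θ₁(h₃)]`. -/
def Dθ₁ {x : X} (c : C.H x) : DHom M N x x :=
  dmk M N ⟨(M.M.id x, N.β₁ c), by rw [M.β₂.map_id, N.diag₂]⟩

/-- The map `[m,n] ↦ θ₂(n)`. -/
def Dθ₂ {x y : X} : DHom M N x y → C.G.Hom x y :=
  Quot.lift (fun p => N.β₂.map p.1.2) (by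
    rintro p q ⟨h, -, h2⟩
    rw [h2, N.β₂.map_comp, N.diag₁, C.G.id_comp])

end DiamondAux

end Aux

/-- Let `𝔊ᵢ` (`i = 1,2,3`) be crossed modules of groupoids
with common object space `X`, `M` a crossing from `𝔊₁` to `𝔊₂` and `N` a
crossing from `𝔊₂` to `𝔊₃`.  On the diamond product `M ◇ N` (the quotient of
`{(m,n) : β₂(m) = δ₂(n)}` by `(β₁(h₂)m, δ₁(h₂)n) ∼ (m,n)`), componentwise
composition and inversion are well defined and make `M ◇ N` a groupoid over
`X`, and with the morphisms `h₁ ↦ [α₁(h₁), s h₁]`, `[m,n] ↦ α₂(m)`,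
`h₃ ↦ [s h₃, θ₁(h₃)]`, `[m,n] ↦ θ₂(n)` it is a crossing from `𝔊₁` to
`𝔊₃`. -/
theorem diamond_product_crossing {X : Type} (A B C : XMod X)
    (M : Crossing A B) (N : Crossing B C) :
    ∃ (dcomp : ∀ {x y z : X}, DHom M N y z → DHom M N x y → DHom M N x z)
      (dinv : ∀ {x y : X}, DHom M N x y → DHom M N y x)
      (did : ∀ x : X, DHom M N x x)
      (dα₁ : ∀ {x : X}, A.H x → DHom M N x x)
      (dα₂ : ∀ {x y : X}, DHom M N x y → A.G.Hom x y)
      (dθ₁ : ∀ {x : X}, C.H x → DHom M N x x)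
      (dθ₂ : ∀ {x y : X}, DHom M N x y → C.G.Hom x y),
      -- componentwise composition is well defined:
      (∀ {x y z : X} (p : DPair M N y z) (q : DPair M N x y),
          dcomp (dmk M N p) (dmk M N q) =
            dmk M N ⟨(M.M.comp p.1.1 q.1.1, N.M.comp p.1.2 q.1.2), by
              rw [M.β₂.map_comp, N.α₂.map_comp, p.2, q.2]⟩) ∧
      -- componentwise inversion is well defined:
      (∀ {x y : X} (p : DPair M N x y),
          dinv (dmk M N p) =
            dmk M N ⟨(M.M.inv p.1.1, N.M.inv p.1.2), by
              rw [M.β₂.map_inv, N.α₂.map_inv, p.2]⟩) ∧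
      (∀ x : X, did x =
          dmk M N ⟨(M.M.id x, N.M.id x), by rw [M.β₂.map_id, N.α₂.map_id]⟩) ∧
      -- `M ◇ N` is a groupoid over `X`:
      (∀ {x y z w : X} (c : DHom M N z w) (d : DHom M N y z) (e : DHom M N x y),
          dcomp (dcomp c d) e = dcomp c (dcomp d e)) ∧
      (∀ {x y : X} (c : DHom M N x y), dcomp (did y) c = c) ∧
      (∀ {x y : X} (c : DHom M N x y), dcomp c (did x) = c) ∧
      (∀ {x y : X} (c : DHom M N x y), dcomp c (dinv c) = did y) ∧
      (∀ {x y : X} (c : DHom M N x y), dcomp (dinv c) c = did x) ∧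
      -- the structure morphisms of the crossing `𝔊₁ ◇→ 𝔊₃`:
      (∀ {x : X} (a : A.H x),
          dα₁ a = dmk M N ⟨(M.α₁ a, N.M.id x), by
            rw [M.diag₁, N.α₂.map_id]⟩) ∧
      (∀ {x : X} (c : C.H x),
          dθ₁ c = dmk M N ⟨(M.M.id x, N.β₁ c), by
            rw [M.β₂.map_id, N.diag₂]⟩) ∧
      (∀ {x y : X} (p : DPair M N x y), dα₂ (dmk M N p) = M.α₂.map p.1.1) ∧
      (∀ {x y : X} (p : DPair M N x y), dθ₂ (dmk M N p) = N.β₂.map p.1.2) ∧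
      -- and the crossing axioms hold:
      (∀ {x : X} (a a' : A.H x),
          dα₁ (A.mul a a') = dcomp (dα₁ a) (dα₁ a')) ∧
      (∀ {x : X} (c c' : C.H x),
          dθ₁ (C.mul c c') = dcomp (dθ₁ c) (dθ₁ c')) ∧
      (∀ {x y z : X} (c : DHom M N y z) (d : DHom M N x y),
          dα₂ (dcomp c d) = A.G.comp (dα₂ c) (dα₂ d)) ∧
      (∀ {x y z : X} (c : DHom M N y z) (d : DHom M N x y),
          dθ₂ (dcomp c d) = C.G.comp (dθ₂ c) (dθ₂ d)) ∧
      (∀ {x : X} (a : A.H x), dα₂ (dα₁ a) = A.δ a) ∧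
      (∀ {x : X} (c : C.H x), dθ₂ (dθ₁ c) = C.δ c) ∧
      (∀ {x : X} (a : A.H x), dθ₂ (dα₁ a) = C.G.id x) ∧
      (∀ {x : X} (c : C.H x), dα₂ (dθ₁ c) = A.G.id x) ∧
      (∀ {x : X} (c c' : C.H x), dθ₁ c = dθ₁ c' → c = c') ∧
      (∀ {x y : X} (g : A.G.Hom x y), ∃ c : DHom M N x y, dα₂ c = g) ∧
      (∀ {x : X} (c : DHom M N x x), dα₂ c = A.G.id x →
          ∃ h : C.H x, dθ₁ h = c) ∧
      (∀ {x y : X} (c : DHom M N x y) (a : A.H y),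
          dα₁ (A.act (dα₂ c) a) = dcomp (dinv c) (dcomp (dα₁ a) c)) ∧
      (∀ {x y : X} (c : DHom M N x y) (h : C.H y),
          dθ₁ (C.act (dθ₂ c) h) = dcomp (dinv c) (dcomp (dθ₁ h) c)) := by
  refine ⟨Dcomp M N, Dinv M N, Did M N, Dα₁ M N, Dα₂ M N, Dθ₁ M N, Dθ₂ M N,
    fun p q => rfl, fun p => rfl, fun x => rfl,
    ?_, ?_, ?_, ?_, ?_,
    fun a => rfl, fun c => rfl, fun p => rfl, fun p => rfl,
    ?_, ?_, ?_, ?_,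
    fun a => M.tri₁ a, fun c => N.tri₂ c,
    fun a => N.β₂.map_id _, fun c => M.α₂.map_id _,
    ?_, ?_, ?_, ?_, ?_⟩
  · -- associativity
    intro x y z w c d e
    induction c using Quot.ind
    induction d using Quot.ind
    induction e using Quot.ind
    exact dmk_eq_of M N (M.M.comp_assoc _ _ _) (N.M.comp_assoc _ _ _)
  · -- left identity
    intro x y c
    induction c using Quot.ind
    exact dmk_eq_of M N (M.M.id_comp _) (N.M.id_comp _)
  · -- right identity
    intro x y c
    induction c using Quot.ind
    exact dmk_eq_of M N (M.M.comp_id _) (N.M.comp_id _)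
  · -- right inverse
    intro x y c
    induction c using Quot.ind
    exact dmk_eq_of M N (M.M.comp_inv _) (N.M.comp_inv _)
  · -- left inverse
    intro x y c
    induction c using Quot.ind
    exact dmk_eq_of M N (M.M.inv_comp _) (N.M.inv_comp _)
  · -- dα₁ is multiplicative
    intro x a a'
    exact dmk_eq_of M N (M.α₁_mul a a') (N.M.id_comp _).symm
  · -- dθ₁ is multiplicative
    intro x c c'
    exact dmk_eq_of M N (M.M.id_comp _).symm (N.β₁_mul c c')
  · -- dα₂ is a morphism
    intro x y z c d
    induction c using Quot.ind
    induction d using Quot.ind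
    exact M.α₂.map_comp _ _
  · -- dθ₂ is a morphism
    intro x y z c d
    induction c using Quot.ind
    induction d using Quot.ind
    exact N.β₂.map_comp _ _
  · -- dθ₁ is injective
    intro x c c' hcc
    obtain ⟨h, h1, h2⟩ := drel_of_eq M N hcc
    rw [M.M.comp_id] at h1
    have hone : h = B.one x := M.β₁_inj _ _ (by rw [← h1, M.β₁_one])
    rw [hone, N.α₁_one, N.M.id_comp] at h2
    exact N.β₁_inj _ _ h2
  · -- dα₂ is surjective
    intro x y g
    obtain ⟨m, hm⟩ := M.α₂_surj g
    obtain ⟨n, hn⟩ := N.α₂_surj (M.β₂.map m)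
    exact ⟨dmk M N ⟨(m, n), hn.symm⟩, hm⟩
  · -- exactness
    intro x c hc
    induction c using Quot.ind
    rename_i p
    obtain ⟨b, hb⟩ := M.exact₁ p.1.1 hc
    have hδ : N.α₂.map p.1.2 = B.δ b := by rw [← p.2, ← hb, M.tri₂]
    have hn : N.α₂.map (N.M.comp (N.α₁ (B.hinv b)) p.1.2) = B.G.id x := by
      rw [N.α₂.map_comp, N.tri₁, hδ, ← B.δ_mul, B.inv_mul, B.δ_one]
    obtain ⟨hC, hC'⟩ := N.exact₁ _ hn
    refine ⟨hC, ?_⟩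
    refine (Quot.sound ⟨b, ?_, ?_⟩).symm
    · show p.1.1 = M.M.comp (M.β₁ b) (M.M.id x)
      rw [M.M.comp_id, hb]
    · show p.1.2 = N.M.comp (N.α₁ b) (N.β₁ hC)
      rw [hC', N.α₁_hinv, ← N.M.comp_assoc, N.M.comp_inv, N.M.id_comp]
  · -- first conjugation identity
    intro x y c a
    induction c using Quot.ind
    rename_i p
    refine dmk_eq_of M N (M.conj₁ _ a) ?_
    show N.M.id x = N.M.comp (N.M.inv p.1.2) (N.M.comp (N.M.id y) p.1.2)
    rw [N.M.id_comp, N.M.inv_comp]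
  · -- second conjugation identity
    intro x y c h
    induction c using Quot.ind
    rename_i p
    refine dmk_eq_of M N ?_ (N.conj₂ _ h)
    show M.M.id x = M.M.comp (M.M.inv p.1.1) (M.M.comp (M.M.id y) p.1.1)
    rw [M.M.id_comp, M.M.inv_comp]
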